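/- The function P : F_3^n → ℝ/ℤ given by P(x) = |x|/9 is a nonclassical polynomial of degree at most 3: for all h₁, ..., h₄ ∈ F_3^n and all x, Δ_{h₄}Δ_{h₃}Δ_{h₂}Δ_{h₁}P(x) = 0. -/

import Mathlib

/-- Additive derivative of a map `P` in direction `h`. -/
def addDeriv {G M : Type*} [Add G] [Sub M] (h : G) (P : G → M) : G → M :=
  fun x => P (x + h) - P x

/-!
Writing `Q x = ∑ᵢ |xᵢ| ∈ ℤ`, the map `P` is `Q` followed by the additive map `z ↦ z/9 mod 1`,
so `Δ_{h₄}Δ_{h₃}Δ_{h₂}Δ_{h₁}P` is the image of `Δ_{h₄}Δ_{h₃}Δ_{h₂}Δ_{h₁}Q`. Derivatives of `Q`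
split into coordinates, and on `F_3` every fourth difference of the lift `|·|` is divisible
by `9` (a finite check), so the image vanishes.
-/

section addDeriv

variable {G M N : Type*}

theorem addDeriv_comp_addMonoidHom [Add G] [AddGroup M] [AddGroup N] (φ : M →+ N) (h : G)
    (F : G → M) : addDeriv h (φ ∘ F) = φ ∘ addDeriv h F := by
  ext x
  simp [addDeriv]

theorem addDeriv_finset_sum [Add G] [AddCommGroup M] {ι : Type*} (s : Finset ι)
    (F : ι → G → M) (h : G) : addDeriv h (∑ i ∈ s, F i) = ∑ i ∈ s, addDeriv h (F i) := by
  ext x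
  simp [addDeriv, Finset.sum_apply]

theorem addDeriv_comp_eval [Add G] [Sub M] {ι : Type*} (f : G → M) (i : ι) (h : ι → G) :
    addDeriv h (f ∘ Function.eval i) = addDeriv (h i) f ∘ Function.eval i :=
  rfl

end addDeriv

theorem nine_dvd_fourth_addDeriv_val (a b c d e : ZMod 3) :
    (9 : ℤ) ∣ addDeriv b (addDeriv c (addDeriv d (addDeriv e fun t : ZMod 3 => (t.val : ℤ)))) a := by
  revert a b c d e
  decide

theorem nine_dvd_fourth_addDeriv_sum_val {ι : Type*} [Fintype ι] (h₁ h₂ h₃ h₄ x : ι → ZMod 3) :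
    (9 : ℤ) ∣ addDeriv h₄ (addDeriv h₃ (addDeriv h₂ (addDeriv h₁
      (∑ i, (fun t : ZMod 3 => (t.val : ℤ)) ∘ Function.eval i)))) x := by
  simp only [addDeriv_finset_sum, addDeriv_comp_eval, Finset.sum_apply]
  exact Finset.dvd_sum fun i _ => nine_dvd_fourth_addDeriv_val _ _ _ _ _

theorem stmt_6 (n : ℕ)
    (P : (Fin n → ZMod 3) → AddCircle (1 : ℝ))
    (hP : ∀ x, P x = ((((∑ i, ((x i).val : ℝ)) / 9 : ℝ)) : AddCircle (1 : ℝ)))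
    (h₁ h₂ h₃ h₄ x : Fin n → ZMod 3) :
    addDeriv h₄ (addDeriv h₃ (addDeriv h₂ (addDeriv h₁ P))) x = 0 := by
  set φ : ℤ →+ AddCircle (1 : ℝ) := zmultiplesHom _ ((9⁻¹ : ℝ) : AddCircle (1 : ℝ))
  have hP_comp : P = φ ∘ ∑ i, (fun t : ZMod 3 => (t.val : ℤ)) ∘ Function.eval i := by
    ext x
    simp only [hP, φ, Function.comp_apply, Finset.sum_apply, zmultiplesHom_apply,
      ← AddCircle.coe_zsmul, zsmul_eq_mul]
    push_cast
    ring_nf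
  obtain ⟨m, hm⟩ := nine_dvd_fourth_addDeriv_sum_val h₁ h₂ h₃ h₄ x
  simp only [hP_comp, addDeriv_comp_addMonoidHom, Function.comp_apply, hm]
  have hφ_nine : φ 9 = 0 := by
    simp only [φ, zmultiplesHom_apply, ← AddCircle.coe_zsmul]
    norm_num
  rw [mul_comm, ← smul_eq_mul, map_zsmul, hφ_nine, smul_zero]
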